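/- Let R be a commutative ring with identity and M an R-module in which every non-zero submodule contains a minimal submodule, and let 𝓜 be the set of all minimal submodules of M (assumed to consist of proper submodules of M). Then 𝓜 is a minimal dominating set of the graph SSI(M); in particular the domination number of SSI(M) is at most the cardinality of 𝓜. -/

import Mathlib

/-!
Minimal submodules are second, so every non-zero proper submodule is adjacent in `SSI(M)` to a
minimal submodule it properly contains. Two distinct minimal submodules meet in `0`, which is not
second, so the minimal submodules form an independent set; and no proper subset of an independent
set dominates, since a dropped vertex could only be dominated from inside the set.
-/

open Submodule

/-- A non-zero submodule `S` of `M` is *second* if for every `r : R`,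
either `r S = 0` or `r S = S`. -/
def IsSecondSubmodule (R : Type*) {M : Type*} [CommRing R] [AddCommGroup M] [Module R M]
    (S : Submodule R M) : Prop :=
  S ≠ ⊥ ∧ ∀ r : R, S.map (r • (LinearMap.id : M →ₗ[R] M)) = ⊥ ∨
    S.map (r • (LinearMap.id : M →ₗ[R] M)) = S

/-- A proper submodule `P` of `M` is *prime* if whenever `r • m ∈ P`,
either `m ∈ P` or `r M ⊆ P`. -/
def IsPrimeSubmodule (R : Type*) {M : Type*} [CommRing R] [AddCommGroup M] [Module R M]
    (P : Submodule R M) : Prop :=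
  P ≠ ⊤ ∧ ∀ (r : R) (m : M), r • m ∈ P → m ∈ P ∨ ∀ x : M, r • x ∈ P

/-- The second submodule intersection graph `SSI(M)`: vertices are the non-zero proper
submodules of `M`, and two distinct vertices are adjacent iff their intersection is a
second submodule of `M`. -/
def SSI (R M : Type*) [CommRing R] [AddCommGroup M] [Module R M] :
    SimpleGraph {N : Submodule R M // N ≠ ⊥ ∧ N ≠ ⊤} where
  Adj N K := N ≠ K ∧ IsSecondSubmodule R (N.1 ⊓ K.1)
  symm := ⟨fun N K ⟨h1, h2⟩ => ⟨h1.symm, by rwa [inf_comm]⟩⟩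
  loopless := ⟨fun N h => h.1 rfl⟩

/-- The prime submodule sum graph `PSS(M)`: vertices are the non-zero proper
submodules of `M`, and two distinct vertices are adjacent iff their sum is a
prime submodule of `M`. -/
def PSS (R M : Type*) [CommRing R] [AddCommGroup M] [Module R M] :
    SimpleGraph {N : Submodule R M // N ≠ ⊥ ∧ N ≠ ⊤} where
  Adj N K := N ≠ K ∧ IsPrimeSubmodule R (N.1 ⊔ K.1)
  symm := ⟨fun N K ⟨h1, h2⟩ => ⟨h1.symm, by rwa [sup_comm]⟩⟩
  loopless := ⟨fun N h => h.1 rfl⟩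

/-- The prime ideal sum graph `PIS(R)`: vertices are the non-zero proper ideals of `R`,
and two distinct vertices are adjacent iff their sum is a prime ideal of `R`. -/
def PIS (R : Type*) [CommRing R] :
    SimpleGraph {I : Ideal R // I ≠ ⊥ ∧ I ≠ ⊤} where
  Adj I J := I ≠ J ∧ (I.1 + J.1).IsPrime
  symm := ⟨fun I J ⟨h1, h2⟩ => ⟨h1.symm, by rwa [add_comm]⟩⟩
  loopless := ⟨fun I h => h.1 rfl⟩

/-- A non-empty set of vertices `D` is a dominating set of `G` if every vertex outside
`D` is adjacent to some vertex of `D`. -/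
def IsDominatingSet {V : Type*} (G : SimpleGraph V) (D : Set V) : Prop :=
  D.Nonempty ∧ ∀ v ∉ D, ∃ d ∈ D, G.Adj v d

/-- The domination number of `G`: the minimum cardinality of a dominating set. -/
noncomputable def dominationNumber {V : Type*} (G : SimpleGraph V) : ℕ∞ :=
  ⨅ D ∈ {D : Set V | IsDominatingSet G D}, D.encard

section DominatingSet

variable {V : Type*} {G : SimpleGraph V} {D : Set V}

theorem dominationNumber_le_encard (hD : IsDominatingSet G D) :
    dominationNumber G ≤ D.encard :=
  iInf₂_le D hD

theorem SimpleGraph.IsIndepSet.not_isDominatingSet_of_ssubset (hD : G.IsIndepSet D)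
    {D' : Set V} (hD' : D' ⊂ D) : ¬ IsDominatingSet G D' := by
  rintro ⟨-, hdom⟩
  obtain ⟨a, haD, haD'⟩ := Set.exists_of_ssubset hD'
  obtain ⟨d, hdD', had⟩ := hdom a haD'
  exact hD haD (hD'.1 hdD') (G.ne_of_adj had) had

end DominatingSet

section SecondSubmodule

variable {R M : Type*} [CommRing R] [AddCommGroup M] [Module R M]

theorem IsAtom.isSecondSubmodule {S : Submodule R M} (hS : IsAtom S) :
    IsSecondSubmodule R S := by
  refine ⟨hS.1, fun r => ?_⟩
  have hle : S.map (r • (LinearMap.id : M →ₗ[R] M)) ≤ S := by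
    rintro _ ⟨s, hs, rfl⟩
    exact S.smul_mem r hs
  exact hle.lt_or_eq.imp_left (hS.2 _)

def SSI.atomVertex {S : Submodule R M} (hS : IsAtom S) (hS_top : S ≠ ⊤) :
    {N : Submodule R M // N ≠ ⊥ ∧ N ≠ ⊤} :=
  ⟨S, hS.1, hS_top⟩

theorem SSI.adj_of_le_of_isAtom {N S : {N : Submodule R M // N ≠ ⊥ ∧ N ≠ ⊤}}
    (hS : IsAtom S.1) (hle : S.1 ≤ N.1) (hne : N ≠ S) : (SSI R M).Adj N S := by
  refine ⟨hne, ?_⟩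
  rw [inf_eq_right.mpr hle]
  exact hS.isSecondSubmodule

theorem SSI.isIndepSet_setOf_isAtom :
    (SSI R M).IsIndepSet {v | IsAtom v.1} := by
  intro a ha d hd hne hadj
  have hdisj : a.1 ⊓ d.1 = ⊥ := (ha.disjoint_of_ne hd (Subtype.coe_ne_coe.mpr hne)).eq_bot
  exact hadj.2.1 hdisj

theorem SSI.isDominatingSet_setOf_isAtom [Nontrivial M]
    (hmin : ∀ N : Submodule R M, N ≠ ⊥ → ∃ S : Submodule R M, IsAtom S ∧ S ≤ N)
    (hproper : ∀ S : Submodule R M, IsAtom S → S ≠ ⊤) :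
    IsDominatingSet (SSI R M) {v | IsAtom v.1} := by
  refine ⟨?_, fun v hv => ?_⟩
  · obtain ⟨S, hS, -⟩ := hmin ⊤ bot_ne_top.symm
    exact ⟨SSI.atomVertex hS (hproper S hS), hS⟩
  · obtain ⟨S, hS, hSv⟩ := hmin v.1 v.2.1
    refine ⟨SSI.atomVertex hS (hproper S hS), hS, SSI.adj_of_le_of_isAtom hS hSv ?_⟩
    rintro rfl
    exact hv hS

end SecondSubmodule

/-- **Theorem 2.16.** The set of minimal submodules of `M` (assumed proper) is a minimal
dominating set of `SSI(M)`, and the domination number of `SSI(M)` is at most its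
cardinality. -/
theorem ssi_minimal_submodules_minimal_dominating
    (R M : Type*) [CommRing R] [AddCommGroup M] [Module R M] [Nontrivial M]
    (hmin : ∀ N : Submodule R M, N ≠ ⊥ → ∃ S : Submodule R M, IsAtom S ∧ S ≤ N)
    (hproper : ∀ S : Submodule R M, IsAtom S → S ≠ ⊤) :
    IsDominatingSet (SSI R M)
        {v : {N : Submodule R M // N ≠ ⊥ ∧ N ≠ ⊤} | IsAtom v.1} ∧
      (∀ D ⊂ {v : {N : Submodule R M // N ≠ ⊥ ∧ N ≠ ⊤} | IsAtom v.1},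
        ¬ IsDominatingSet (SSI R M) D) ∧
      dominationNumber (SSI R M) ≤
        {v : {N : Submodule R M // N ≠ ⊥ ∧ N ≠ ⊤} | IsAtom v.1}.encard := by
  have hdom := SSI.isDominatingSet_setOf_isAtom hmin hproper
  exact ⟨hdom, fun _ hD => SSI.isIndepSet_setOf_isAtom.not_isDominatingSet_of_ssubset hD,
    dominationNumber_le_encard hdom⟩
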